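/- Suppose μ : ℝ → [0,∞) is C² with |μ′| ≤ 1 and |μ″| ≤ μ″_max everywhere. Then the Hessian of φ̃(X) = Σ_{i,j=1}^n μ([g(X)g(X)ᵀ − M]_{i,j}) satisfies ‖∇²φ̃(X)‖²_F ≤ 12[n²k + nk(μ″_max)²‖X‖⁴ + n(μ″_max)²‖X‖⁴], where ‖·‖_F is the Frobenius norm of the Hessian matrix and ‖X‖ the Euclidean norm. -/

import Mathlib

def idx (n k : ℕ) (i : Fin n) (j : Fin k) : Fin (n * k) :=
  ⟨(i : ℕ) * k + (j : ℕ), by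
    have h1 : (i : ℕ) * k + (j : ℕ) < (i : ℕ) * k + k := Nat.add_lt_add_left j.2 _
    have h2 : (i : ℕ) * k + k = ((i : ℕ) + 1) * k := by ring
    have h3 : ((i : ℕ) + 1) * k ≤ n * k := Nat.mul_le_mul_right _ i.2
    omega⟩

def wEntry (n k : ℕ) (M : Fin n → Fin n → ℝ) (X : EuclideanSpace ℝ (Fin (n * k)))
    (i j : Fin n) : ℝ :=
  (∑ l : Fin k, X (idx n k i l) * X (idx n k j l)) - M i j

def phiTilde (n k : ℕ) (M : Fin n → Fin n → ℝ) (μ : ℝ → ℝ)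
    (X : EuclideanSpace ℝ (Fin (n * k))) : ℝ :=
  ∑ i : Fin n, ∑ j : Fin n, μ (wEntry n k M X i j)

/-!
Write `Z i l = X (idx n k i l)` and `W = Z Zᵀ - M`. Differentiating twice, the Hessian entry at
`((a, b), (p, q))` is `δ_bq α_ap + δ_ap ∑ i, β_ai Z_ib Z_iq + β_ap Z_pb Z_aq`, where
`α_ij = μ'(W_ij) + μ'(W_ji)` and `β_ij = μ''(W_ij) + μ''(W_ji)`, so `|α| ≤ 2` and `|β| ≤ 2c`.
By `(x + y + z)² ≤ 3 (x² + y² + z²)` the squared Frobenius norm is at most three times the sum of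
the three squared parts: the first is at most `4 n² k`, the second (Cauchy–Schwarz in `i`) at most
`4 n c² ‖X‖⁴`, and the third at most `4 c² ‖X‖⁴ ≤ 4 n k c² ‖X‖⁴`.
-/

open Finset

section BilinearDiagonal

variable {E ι : Type*} [NormedAddCommGroup E] [NormedSpace ℝ E] {g : ℝ → ℝ}

lemma hasFDerivAt_apply_self (B : E →L[ℝ] E →L[ℝ] ℝ) (X : E) :
    HasFDerivAt (fun Y => B Y Y) (B X + B.flip X) X := by
  simpa using B.hasFDerivAt.clm_apply (hasFDerivAt_id X)

lemma hasFDerivAt_comp_apply_self_sub (hg : Differentiable ℝ g) (B : E →L[ℝ] E →L[ℝ] ℝ)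
    (m : ℝ) (X : E) :
    HasFDerivAt (fun Y => g (B Y Y - m)) (deriv g (B X X - m) • (B X + B.flip X)) X :=
  (hg _).hasDerivAt.comp_hasFDerivAt X ((hasFDerivAt_apply_self B X).sub_const m)

lemma fderiv_sum_comp_apply_self_sub (hg : Differentiable ℝ g) (s : Finset ι)
    (B : ι → E →L[ℝ] E →L[ℝ] ℝ) (m : ι → ℝ) (Y v : E) :
    fderiv ℝ (fun Z => ∑ i ∈ s, g (B i Z Z - m i)) Y v
      = ∑ i ∈ s, deriv g (B i Y Y - m i) * (B i Y v + B i v Y) := by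
  rw [(HasFDerivAt.fun_sum fun i _ => hasFDerivAt_comp_apply_self_sub hg (B i) (m i) Y).fderiv]
  simp [mul_add]

lemma fderiv_fderiv_sum_comp_apply_self_sub (hg : ContDiff ℝ 2 g) (s : Finset ι)
    (B : ι → E →L[ℝ] E →L[ℝ] ℝ) (m : ι → ℝ) (X u v : E) :
    fderiv ℝ (fun Y => fderiv ℝ (fun Z => ∑ i ∈ s, g (B i Z Z - m i)) Y v) X u
      = ∑ i ∈ s, (deriv g (B i X X - m i) * (B i u v + B i v u)
          + deriv (deriv g) (B i X X - m i) * (B i X v + B i v X) * (B i X u + B i u X)) := by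
  have hg' : Differentiable ℝ (deriv g) := by
    simpa using hg.differentiable_iteratedDeriv 1 (by norm_num)
  simp_rw [fderiv_sum_comp_apply_self_sub (hg.differentiable (by norm_num))]
  have hlin : ∀ i, HasFDerivAt (fun Y => B i Y v + B i v Y) ((B i).flip v + B i v) X :=
    fun i => ((B i).flip v + B i v).hasFDerivAt
  rw [(HasFDerivAt.fun_sum fun i _ =>
    (hasFDerivAt_comp_apply_self_sub hg' (B i) (m i) X).fun_mul (hlin i)).fderiv]
  simp only [_root_.sum_apply]
  refine sum_congr rfl fun i _ => ?_
  simp only [smul_add, add_apply, smul_apply, ContinuousLinearMap.flip_apply, smul_eq_mul]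
  ring

end BilinearDiagonal

lemma mul_sq_le_of_abs_le {β B : ℝ} (h : |β| ≤ B) (x : ℝ) :
    (β * x) ^ 2 ≤ B ^ 2 * x ^ 2 := by
  rw [mul_pow]
  exact mul_le_mul_of_nonneg_right (sq_le_sq.2 (h.trans (le_abs_self B))) (sq_nonneg x)

lemma sq_sum_mul_mul_le {ι : Type*} (s : Finset ι) {β x y : ι → ℝ} {B : ℝ}
    (hβ : ∀ i ∈ s, |β i| ≤ B) :
    (∑ i ∈ s, β i * x i * y i) ^ 2 ≤ B ^ 2 * (∑ i ∈ s, x i ^ 2) * ∑ i ∈ s, y i ^ 2 := by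
  calc (∑ i ∈ s, β i * x i * y i) ^ 2 ≤ (∑ i ∈ s, (β i * x i) ^ 2) * ∑ i ∈ s, y i ^ 2 :=
        sum_mul_sq_le_sq_mul_sq _ _ _
    _ ≤ (∑ i ∈ s, B ^ 2 * x i ^ 2) * ∑ i ∈ s, y i ^ 2 := by
        gcongr (∑ i ∈ s, ?_) * _ with i hi
        exact mul_sq_le_of_abs_le (hβ i hi) _
    _ = B ^ 2 * (∑ i ∈ s, x i ^ 2) * ∑ i ∈ s, y i ^ 2 := by rw [← mul_sum]

def gramHessianEntry {ι κ : Type*} [Fintype ι] [DecidableEq ι] [DecidableEq κ]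
    (α β : ι → ι → ℝ) (Z : ι → κ → ℝ) (a : ι) (b : κ) (p : ι) (q : κ) : ℝ :=
  (if b = q then α a p else 0) + (if a = p then ∑ i, β a i * Z i b * Z i q else 0)
    + β a p * Z p b * Z a q

section GramHessianBound

variable {ι κ : Type*} [Fintype ι] [Fintype κ] {α β : ι → ι → ℝ} {A B : ℝ} (Z : ι → κ → ℝ)

lemma sum_sq_ite_eq_le [DecidableEq κ] (hα : ∀ a p, |α a p| ≤ A) :
    ∑ a, ∑ b : κ, ∑ p, ∑ q : κ, (if b = q then α a p else 0) ^ 2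
      ≤ Fintype.card ι ^ 2 * Fintype.card κ * A ^ 2 := by
  simp only [ite_pow, ne_eq, OfNat.ofNat_ne_zero, not_false_eq_true, zero_pow, sum_ite_eq,
    mem_univ, if_true]
  calc ∑ a, ∑ b : κ, ∑ p, α a p ^ 2 ≤ ∑ _a : ι, ∑ _b : κ, ∑ _p : ι, A ^ 2 := by
        gcongr ∑ _a, ∑ _b, ∑ _p, ?_ with a _ b _ p
        exact sq_le_sq.2 ((hα a p).trans (le_abs_self A))
    _ = _ := by
        simp only [sum_const, card_univ, nsmul_eq_mul]
        ring

lemma sum_sq_ite_eq_sum_le [DecidableEq ι] (hβ : ∀ a p, |β a p| ≤ B) :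
    ∑ a, ∑ b, ∑ p, ∑ q, (if a = p then ∑ i, β a i * Z i b * Z i q else 0) ^ 2
      ≤ Fintype.card ι * B ^ 2 * (∑ i, ∑ l, Z i l ^ 2) ^ 2 := by
  simp only [ite_pow, ne_eq, OfNat.ofNat_ne_zero, not_false_eq_true, zero_pow, sum_ite_irrel,
    sum_const_zero, sum_ite_eq, mem_univ, if_true]
  calc ∑ a, ∑ b, ∑ q, (∑ i, β a i * Z i b * Z i q) ^ 2
      ≤ ∑ _a : ι, ∑ b, ∑ q, B ^ 2 * (∑ i, Z i b ^ 2) * ∑ i, Z i q ^ 2 := by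
        gcongr ∑ _a, ∑ _b, ∑ _q, ?_ with a _ b _ q
        exact sq_sum_mul_mul_le _ fun i _ => hβ a i
    _ = _ := by
        simp only [← mul_sum, ← sum_mul, sum_const, card_univ, nsmul_eq_mul]
        rw [sum_comm (f := fun b i => Z i b ^ 2)]
        ring

lemma sum_sq_mul_mul_le (hβ : ∀ a p, |β a p| ≤ B) :
    ∑ a, ∑ b, ∑ p, ∑ q, (β a p * Z p b * Z a q) ^ 2 ≤ B ^ 2 * (∑ i, ∑ l, Z i l ^ 2) ^ 2 := by
  calc ∑ a, ∑ b, ∑ p, ∑ q, (β a p * Z p b * Z a q) ^ 2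
      ≤ ∑ a, ∑ b, ∑ p, ∑ q, B ^ 2 * (Z p b ^ 2 * Z a q ^ 2) := by
        gcongr ∑ _a, ∑ _b, ∑ _p, ∑ _q, ?_ with a _ b _ p _ q
        rw [mul_assoc, ← mul_pow]
        exact mul_sq_le_of_abs_le (hβ a p) _
    _ = _ := by
        simp only [← mul_sum, ← sum_mul]
        rw [sum_comm (f := fun b p => Z p b ^ 2)]
        ring

lemma sum_sq_gramHessianEntry_le [DecidableEq ι] [DecidableEq κ] (hα : ∀ a p, |α a p| ≤ A)
    (hβ : ∀ a p, |β a p| ≤ B) :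
    ∑ a, ∑ b, ∑ p, ∑ q, gramHessianEntry α β Z a b p q ^ 2
      ≤ 3 * (Fintype.card ι ^ 2 * Fintype.card κ * A ^ 2
        + Fintype.card ι * B ^ 2 * (∑ i, ∑ l, Z i l ^ 2) ^ 2
        + B ^ 2 * (∑ i, ∑ l, Z i l ^ 2) ^ 2) := by
  have add_add_sq_le : ∀ x y z : ℝ, (x + y + z) ^ 2 ≤ 3 * (x ^ 2 + y ^ 2 + z ^ 2) :=
    fun x y z => by nlinarith [sq_nonneg (x - y), sq_nonneg (y - z), sq_nonneg (x - z)]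
  calc ∑ a, ∑ b, ∑ p, ∑ q, gramHessianEntry α β Z a b p q ^ 2
      ≤ ∑ a, ∑ b, ∑ p, ∑ q, 3 * ((if b = q then α a p else 0) ^ 2
          + (if a = p then ∑ i, β a i * Z i b * Z i q else 0) ^ 2
          + (β a p * Z p b * Z a q) ^ 2) := by
        gcongr ∑ _a, ∑ _b, ∑ _p, ∑ _q, ?_
        exact add_add_sq_le _ _ _
    _ ≤ _ := by
        simp only [← mul_sum, sum_add_distrib]
        gcongr
        · exact sum_sq_ite_eq_le hα
        · exact sum_sq_ite_eq_sum_le Z hβ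
        · exact sum_sq_mul_mul_le Z hβ

end GramHessianBound

section RowMajor

variable (n k : ℕ)

lemma idx_eq_finProdFinEquiv (i : Fin n) (j : Fin k) :
    idx n k i j = finProdFinEquiv (i, j) := by
  ext
  simp only [idx, finProdFinEquiv, Equiv.coe_fn_mk]
  ring

lemma idx_inj {i a : Fin n} {j b : Fin k} :
    idx n k i j = idx n k a b ↔ i = a ∧ j = b := by
  simp [idx_eq_finProdFinEquiv]

lemma sum_fin_mul_eq_sum_idx {M : Type*} [AddCommMonoid M] (f : Fin (n * k) → M) :
    ∑ ν, f ν = ∑ i : Fin n, ∑ j : Fin k, f (idx n k i j) := by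
  rw [← finProdFinEquiv.sum_comp, Fintype.sum_prod_type]
  simp [idx_eq_finProdFinEquiv]

lemma single_idx_apply (a i : Fin n) (b l : Fin k) :
    EuclideanSpace.single (idx n k a b) (1 : ℝ) (idx n k i l)
      = if i = a ∧ l = b then 1 else 0 := by
  simp [idx_inj]

noncomputable def rowGram (i j : Fin n) :
    EuclideanSpace ℝ (Fin (n * k)) →L[ℝ] EuclideanSpace ℝ (Fin (n * k)) →L[ℝ] ℝ :=
  ∑ l : Fin k, (ContinuousLinearMap.mul ℝ ℝ).bilinearComp
    (EuclideanSpace.proj (idx n k i l)) (EuclideanSpace.proj (idx n k j l))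

lemma rowGram_apply (i j : Fin n) (Y Y' : EuclideanSpace ℝ (Fin (n * k))) :
    rowGram n k i j Y Y' = ∑ l : Fin k, Y (idx n k i l) * Y' (idx n k j l) := by
  simp [rowGram, _root_.sum_apply]

lemma phiTilde_eq_sum_rowGram (M : Fin n → Fin n → ℝ) (μ : ℝ → ℝ) :
    phiTilde n k M μ
      = fun Y => ∑ p : Fin n × Fin n, μ (rowGram n k p.1 p.2 Y Y - M p.1 p.2) := by
  ext Y
  simp [phiTilde, wEntry, rowGram_apply, Fintype.sum_prod_type]

lemma rowGram_apply_single (i j p : Fin n) (q : Fin k)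
    (Y : EuclideanSpace ℝ (Fin (n * k))) :
    rowGram n k i j Y (EuclideanSpace.single (idx n k p q) 1)
      = if j = p then Y (idx n k i q) else 0 := by
  simp [rowGram_apply, idx_inj, ite_and]

lemma rowGram_single_apply (i j a : Fin n) (b : Fin k)
    (Y : EuclideanSpace ℝ (Fin (n * k))) :
    rowGram n k i j (EuclideanSpace.single (idx n k a b) 1) Y
      = if i = a then Y (idx n k j b) else 0 := by
  simp [rowGram_apply, idx_inj, ite_and]

lemma rowGram_apply_self_sub (M : Fin n → Fin n → ℝ) (X : EuclideanSpace ℝ (Fin (n * k)))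
    (i j : Fin n) : rowGram n k i j X X - M i j = wEntry n k M X i j := by
  rw [rowGram_apply, wEntry]

lemma fderiv_fderiv_phiTilde_single (M : Fin n → Fin n → ℝ) {μ : ℝ → ℝ}
    (hμ : ContDiff ℝ 2 μ) (X : EuclideanSpace ℝ (Fin (n * k))) (a p : Fin n) (b q : Fin k) :
    fderiv ℝ (fun Y => fderiv ℝ (phiTilde n k M μ) Y (EuclideanSpace.single (idx n k a b) 1)) X
        (EuclideanSpace.single (idx n k p q) 1)
      = gramHessianEntry (fun i j => deriv μ (wEntry n k M X i j) + deriv μ (wEntry n k M X j i))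
          (fun i j => deriv (deriv μ) (wEntry n k M X i j) + deriv (deriv μ) (wEntry n k M X j i))
          (fun i l => X (idx n k i l)) a b p q := by
  rw [phiTilde_eq_sum_rowGram, fderiv_fderiv_sum_comp_apply_self_sub hμ]
  simp only [rowGram_apply_single, rowGram_single_apply, single_idx_apply,
    rowGram_apply_self_sub, Fintype.sum_prod_type]
  simp only [gramHessianEntry, ite_and, mul_add, add_mul, mul_ite, ite_mul, mul_one, mul_zero,
    zero_mul, sum_add_distrib, sum_ite_eq', sum_ite_irrel, sum_const_zero, mem_univ, if_true]
  split_ifs <;> simp_all <;> ring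

end RowMajor

theorem phiTilde_hessian_bound_general (n k : ℕ) (M : Fin n → Fin n → ℝ)
    (μ : ℝ → ℝ) (hμ : ContDiff ℝ 2 μ)
    (hμ' : ∀ t, |deriv μ t| ≤ 1)
    (c : ℝ) (hμ'' : ∀ t, |deriv (deriv μ) t| ≤ c)
    (X : EuclideanSpace ℝ (Fin (n * k))) :
    ∑ ν : Fin (n * k), ∑ η : Fin (n * k),
      (fderiv ℝ (fun Y => fderiv ℝ (phiTilde n k M μ) Y
          (EuclideanSpace.single ν 1)) X (EuclideanSpace.single η 1)) ^ 2 ≤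
      12 * ((n : ℝ) ^ 2 * k + n * k * c ^ 2 * ‖X‖ ^ 4 + n * c ^ 2 * ‖X‖ ^ 4) := by
  have hα : ∀ i j : Fin n,
      |deriv μ (wEntry n k M X i j) + deriv μ (wEntry n k M X j i)| ≤ 2 := fun i j =>
    (abs_add_le _ _).trans (by linarith [hμ' (wEntry n k M X i j), hμ' (wEntry n k M X j i)])
  have hβ : ∀ i j : Fin n,
      |deriv (deriv μ) (wEntry n k M X i j) + deriv (deriv μ) (wEntry n k M X j i)| ≤ 2 * c :=
    fun i j => (abs_add_le _ _).trans
      (by linarith [hμ'' (wEntry n k M X i j), hμ'' (wEntry n k M X j i)])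
  have hnorm : ‖X‖ ^ 2 = ∑ i, ∑ l, X (idx n k i l) ^ 2 := by
    rw [EuclideanSpace.norm_sq_eq, sum_fin_mul_eq_sum_idx]
    simp
  have hnk : ‖X‖ ^ 2 ≤ n * k * ‖X‖ ^ 2 := by
    rcases Nat.eq_zero_or_pos (n * k) with h | h
    · rcases Nat.mul_eq_zero.mp h with rfl | rfl <;> simp [hnorm]
    · exact le_mul_of_one_le_left (sq_nonneg _) (by exact_mod_cast h)
  simp_rw [sum_fin_mul_eq_sum_idx n k, fderiv_fderiv_phiTilde_single n k M hμ]
  refine (sum_sq_gramHessianEntry_le _ hα hβ).trans ?_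
  rw [← hnorm, Fintype.card_fin, Fintype.card_fin]
  nlinarith [mul_le_mul_of_nonneg_left hnk (by positivity : 0 ≤ c ^ 2 * ‖X‖ ^ 2)]

theorem phiTilde_hessian_bound (n k : ℕ) (M : Fin n → Fin n → ℝ)
    (hM : ∀ i j, M i j = M j i)
    (μ : ℝ → ℝ) (hμpos : ∀ t, 0 ≤ μ t) (hμ : ContDiff ℝ 2 μ)
    (hμ' : ∀ t, |deriv μ t| ≤ 1)
    (c : ℝ) (hμ'' : ∀ t, |deriv (deriv μ) t| ≤ c)
    (X : EuclideanSpace ℝ (Fin (n * k))) :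
    ∑ ν : Fin (n * k), ∑ η : Fin (n * k),
      (fderiv ℝ (fun Y => fderiv ℝ (phiTilde n k M μ) Y
          (EuclideanSpace.single ν 1)) X (EuclideanSpace.single η 1)) ^ 2 ≤
      12 * ((n : ℝ) ^ 2 * k + n * k * c ^ 2 * ‖X‖ ^ 4 + n * c ^ 2 * ‖X‖ ^ 4) :=
  phiTilde_hessian_bound_general n k M μ hμ hμ' c hμ'' X
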